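/- arXiv:2307.04882 — 4 statements merged into one kernel-verified Lean document; each statement's English description precedes it below -/
import Mathlib

section
/- Let X be a finite graph. There is a well-defined group homomorphism μ : A_X → (P_X)^× (the Magnus representation) determined by μ(s) = 1 + s for each vertex generator s, where P_X is the completed monoid ring of the right-angled Artin monoid M_X. -/
/-- Defining relators of the right-angled Artin group of a graph. -/
def raagRels {V : Type*} (X : SimpleGraph V) : Set (FreeGroup V) :=
  {r | ∃ x y : V, X.Adj x y ∧
    r = FreeGroup.of x * FreeGroup.of y * (FreeGroup.of x)⁻¹ * (FreeGroup.of y)⁻¹}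

/-- The right-angled Artin group of a graph. -/
def RAAG {V : Type*} (X : SimpleGraph V) : Type _ := PresentedGroup (raagRels X)

instance {V : Type*} (X : SimpleGraph V) : Group (RAAG X) := by
  unfold RAAG; infer_instance

/-- The generator of the RAAG corresponding to a vertex. -/
def RAAG.of {V : Type*} (X : SimpleGraph V) (v : V) : RAAG X := PresentedGroup.of v
/-- The congruence on the free monoid defining the right-angled Artin monoid. -/
def raamCon {V : Type*} (X : SimpleGraph V) : Con (FreeMonoid V) :=
  conGen (fun a b => ∃ x y : V, X.Adj x y ∧
    a = FreeMonoid.of x * FreeMonoid.of y ∧ b = FreeMonoid.of y * FreeMonoid.of x)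

/-- The right-angled Artin monoid of a graph. -/
def RAAM {V : Type*} (X : SimpleGraph V) : Type _ := (raamCon X).Quotient

instance {V : Type*} (X : SimpleGraph V) : Monoid (RAAM X) := by
  unfold RAAM; infer_instance

/-- The generator of the RAAM corresponding to a vertex. -/
def RAAM.of {V : Type*} (X : SimpleGraph V) (v : V) : RAAM X :=
  (raamCon X).mk' (FreeMonoid.of v)

/-- The image in `RAAM X` of a word in the vertices. -/
def RAAM.mk {V : Type*} (X : SimpleGraph V) (l : List V) : RAAM X :=
  (raamCon X).mk' (FreeMonoid.ofList l)
noncomputable section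

variable {V : Type*} (X : SimpleGraph V)

/-- The monoid ring of the RAAM. -/
abbrev RaamRing := MonoidAlgebra ℤ (RAAM X)

/-- The image of a vertex generator in the monoid ring. -/
def vgen (v : V) : RaamRing X := MonoidAlgebra.of ℤ (RAAM X) (RAAM.of X v)

/-- The two-sided ideal of the monoid ring generated by the vertex generators,
as a `ℤ`-submodule. -/
def genIdeal : Submodule ℤ (RaamRing X) :=
  Submodule.span ℤ {x | ∃ (a b : RaamRing X) (v : V), x = a * vgen X v * b}

lemma genIdeal_mul_right (x : RaamRing X) (hx : x ∈ genIdeal X) (r : RaamRing X) :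
    x * r ∈ genIdeal X := by
  induction hx using Submodule.span_induction generalizing r with
  | mem y hy =>
      obtain ⟨a, b, v, rfl⟩ := hy
      exact Submodule.subset_span ⟨a, b * r, v, by rw [mul_assoc]⟩
  | zero => rw [zero_mul]; exact (genIdeal X).zero_mem
  | add y z _ _ hy hz => rw [add_mul]; exact (genIdeal X).add_mem (hy r) (hz r)
  | smul c y _ hy => rw [smul_mul_assoc]; exact (genIdeal X).smul_mem c (hy r)

lemma genIdeal_pow_le (k : ℕ) : genIdeal X ^ (k + 2) ≤ genIdeal X ^ (k + 1) := by
  induction k with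
  | zero =>
      rw [pow_one, pow_succ, pow_one]
      exact Submodule.mul_le.2 fun x hx y _ => genIdeal_mul_right X x hx y
  | succ n ih =>
      rw [pow_succ (n := n + 2), pow_succ (n := n + 1)]
      exact Submodule.mul_le.2 fun x hx y hy => Submodule.mul_mem_mul (ih hx) hy

/-- The quotient congruence by the `(k+1)`-st power of `genIdeal`. -/
def qcon (k : ℕ) : RingCon (RaamRing X) :=
  ringConGen (fun a b => a - b ∈ genIdeal X ^ (k + 1))

/-- The quotient ring `ℤ[M_X]/I^{k+1}`. -/
abbrev QRing (k : ℕ) := (qcon X k).Quotient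

lemma qcon_le (k : ℕ) : qcon X (k + 1) ≤ qcon X k := by
  refine RingCon.ringConGen_le.2 fun a b h => ?_
  exact RingConGen.Rel.of _ _ (genIdeal_pow_le X k h)

/-- The transition map `ℤ[M_X]/I^{k+2} → ℤ[M_X]/I^{k+1}`. -/
def qtrans (k : ℕ) : QRing X (k + 1) →+* QRing X k where
  toFun := Quotient.lift (fun r => (RingCon.mk' (qcon X k)) r)
    (fun a b h => (RingCon.eq _).2 (qcon_le X k h))
  map_one' := rfl
  map_mul' := fun a b => Quotient.inductionOn₂ a b fun _ _ => rfl
  map_zero' := rfl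
  map_add' := fun a b => Quotient.inductionOn₂ a b fun _ _ => rfl

@[simp] lemma qtrans_mk (k : ℕ) (r : RaamRing X) :
    qtrans X k (RingCon.mk' (qcon X (k + 1)) r) = RingCon.mk' (qcon X k) r := rfl

/-- The ring of partially commuting power series `P_X = lim← ℤ[M_X]/I^k`,
realized as the subring of compatible sequences in `Π k, ℤ[M_X]/I^{k+1}`. -/
def PSeries : Subring (Π k, QRing X k) where
  carrier := {f | ∀ k, qtrans X k (f (k + 1)) = f k}
  one_mem' := fun k => map_one _
  mul_mem' := fun {a b} ha hb k => by
    simp only [Pi.mul_apply, map_mul, ha k, hb k]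
  zero_mem' := fun k => map_zero _
  add_mem' := fun {a b} ha hb k => by
    simp only [Pi.add_apply, map_add, ha k, hb k]
  neg_mem' := fun {a} ha k => by
    simp only [Pi.neg_apply, map_neg, ha k]

/-- The canonical map `ℤ[M_X] → P_X`. -/
def toPSeries : RaamRing X →+* PSeries X where
  toFun r := ⟨fun k => RingCon.mk' (qcon X k) r, fun k => rfl⟩
  map_one' := by ext k; exact map_one _
  map_mul' a b := by ext k; exact map_mul _ a b
  map_zero' := by ext k; exact map_zero _
  map_add' a b := by ext k; exact map_add _ a b

/-- The ideal of power series with zero constant term, as a `ℤ`-submodule of `P_X`. -/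
def augIdeal : Submodule ℤ (PSeries X) where
  carrier := {f | (f : Π k, QRing X k) 0 = 0}
  zero_mem' := rfl
  add_mem' := fun {a b} ha hb => by
    show ((a : Π k, QRing X k) + b) 0 = 0
    simp only [Pi.add_apply]
    rw [ha, hb, add_zero]
  smul_mem' := fun c a ha => by
    show (c • (a : Π k, QRing X k)) 0 = 0
    simp only [Pi.smul_apply]
    rw [ha, smul_zero]

end

/-!
For `x ∈ I` the element `1 - x` is invertible in `P_X`: the partial geometric sums `∑_{i ≤ k} xⁱ`
form a compatible sequence because `xⁱ ∈ Iⁱ`, and `(1 - x) ∑_{i ≤ k} xⁱ = 1 - x^{k+1} ≡ 1`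
modulo `I^{k+1}`. Taking `x = -s` makes each `1 + s` a unit. For adjacent `s, s'` we have
`s s' = s' s` already in `M_X`, so `1 + s` and `1 + s'` commute; hence `s ↦ 1 + s` kills the
defining relators of `A_X` and extends uniquely to a homomorphism on `A_X`.
-/

section Magnus

variable {V : Type*} (X : SimpleGraph V)

lemma mk'_qcon_eq_of_sub_mem {k : ℕ} {a b : RaamRing X} (h : a - b ∈ genIdeal X ^ (k + 1)) :
    RingCon.mk' (qcon X k) a = RingCon.mk' (qcon X k) b :=
  (RingCon.eq _).2 (RingConGen.Rel.of _ _ h)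

lemma mk'_qcon_eq_zero_of_mem {k : ℕ} {x : RaamRing X} (hx : x ∈ genIdeal X ^ (k + 1)) :
    RingCon.mk' (qcon X k) x = 0 := by
  simpa using mk'_qcon_eq_of_sub_mem X (b := 0) (by simpa using hx)

lemma vgen_mem_genIdeal (v : V) : vgen X v ∈ genIdeal X :=
  Submodule.subset_span ⟨1, 1, v, by simp⟩

lemma vgen_commute {x y : V} (h : X.Adj x y) : Commute (vgen X x) (vgen X y) := by
  simp only [Commute, SemiconjBy, vgen, ← map_mul]
  congr 1
  exact (Con.eq _).2 (ConGen.Rel.of _ _ ⟨x, y, h, rfl, rfl⟩)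

noncomputable def geomSeries {x : RaamRing X} (hx : x ∈ genIdeal X) : PSeries X :=
  ⟨fun k => RingCon.mk' (qcon X k) (∑ i ∈ Finset.range (k + 1), x ^ i), fun k => by
    rw [qtrans_mk]
    refine mk'_qcon_eq_of_sub_mem X ?_
    rw [Finset.sum_range_succ (n := k + 1), add_sub_cancel_left]
    exact Submodule.pow_mem_pow _ hx _⟩

variable {X}

lemma one_sub_toPSeries_mul_geomSeries {x : RaamRing X} (hx : x ∈ genIdeal X) :
    (1 - toPSeries X x) * geomSeries X hx = 1 := by
  ext k
  show RingCon.mk' (qcon X k) ((1 - x) * ∑ i ∈ Finset.range (k + 1), x ^ i) =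
    RingCon.mk' (qcon X k) 1
  rw [mul_neg_geom_sum, map_sub, mk'_qcon_eq_zero_of_mem X (Submodule.pow_mem_pow _ hx _),
    sub_zero]

lemma geomSeries_mul_one_sub_toPSeries {x : RaamRing X} (hx : x ∈ genIdeal X) :
    geomSeries X hx * (1 - toPSeries X x) = 1 := by
  ext k
  show RingCon.mk' (qcon X k) ((∑ i ∈ Finset.range (k + 1), x ^ i) * (1 - x)) =
    RingCon.mk' (qcon X k) 1
  rw [geom_sum_mul_neg, map_sub, mk'_qcon_eq_zero_of_mem X (Submodule.pow_mem_pow _ hx _),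
    sub_zero]

lemma isUnit_one_sub_toPSeries {x : RaamRing X} (hx : x ∈ genIdeal X) :
    IsUnit (1 - toPSeries X x) :=
  isUnit_iff_exists.2
    ⟨geomSeries X hx, one_sub_toPSeries_mul_geomSeries hx, geomSeries_mul_one_sub_toPSeries hx⟩

lemma isUnit_one_add_toPSeries {x : RaamRing X} (hx : x ∈ genIdeal X) :
    IsUnit (1 + toPSeries X x) := by
  simpa only [map_neg, sub_neg_eq_add] using isUnit_one_sub_toPSeries ((genIdeal X).neg_mem hx)

variable (X)

noncomputable def magnusUnit (v : V) : (PSeries X)ˣ :=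
  (isUnit_one_add_toPSeries (vgen_mem_genIdeal X v)).unit

lemma val_magnusUnit (v : V) :
    (magnusUnit X v : PSeries X) = 1 + toPSeries X (vgen X v) :=
  IsUnit.unit_spec _

lemma magnusUnit_commute {x y : V} (h : X.Adj x y) :
    Commute (magnusUnit X x) (magnusUnit X y) := by
  refine Commute.units_of_val ?_
  rw [val_magnusUnit, val_magnusUnit]
  exact (Commute.one_right _).add_right
    ((Commute.one_left _).add_left ((vgen_commute X h).map (toPSeries X)))

lemma lift_magnusUnit_raagRels : ∀ r ∈ raagRels X, FreeGroup.lift (magnusUnit X) r = 1 := by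
  rintro _ ⟨x, y, h, rfl⟩
  simp only [map_mul, map_inv, FreeGroup.lift_apply_of, (magnusUnit_commute X h).eq,
    mul_inv_cancel_right, mul_inv_cancel]

end Magnus

theorem magnus_representation_exists_general {V : Type*} (X : SimpleGraph V) :
    ∃! μ : RAAG X →* (PSeries X)ˣ,
      ∀ v : V, (μ (RAAG.of X v) : PSeries X) = 1 + toPSeries X (vgen X v) := by
  have hμ_of : ∀ v, (PresentedGroup.toGroup (lift_magnusUnit_raagRels X) (RAAG.of X v) :
      PSeries X) = 1 + toPSeries X (vgen X v) := fun v => by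
    rw [RAAG.of, PresentedGroup.toGroup.of, val_magnusUnit]
  exact ⟨_, hμ_of, fun μ hμ => PresentedGroup.ext fun v => Units.ext ((hμ v).trans (hμ_of v).symm)⟩

theorem magnus_representation_exists {V : Type*} [Fintype V] (X : SimpleGraph V) :
    ∃! μ : RAAG X →* (PSeries X)ˣ,
      ∀ v : V, (μ (RAAG.of X v) : PSeries X) = 1 + toPSeries X (vgen X v) :=
  magnus_representation_exists_general X
end

section
/- Let X be a finite graph and let w ∈ A_X be represented by a fully reduced word w = s₁^{e₁} ⋯ s_n^{e_n}. Then the word norm of w with respect to the vertex generating set S = V(X) equals |e₁| + ⋯ + |e_n|. -/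
/-- Word norm with respect to a subset `S` of a group. -/
noncomputable def wordNorm {G : Type*} [Group G] (S : Set G) (g : G) : ℕ :=
  sInf {n | ∃ l : List G, l.length = n ∧ (∀ x ∈ l, x ∈ S ∨ x⁻¹ ∈ S) ∧ l.prod = g}
/-- A fully reduced word datum `s₁^{e₁} ⋯ s_n^{e_n}` in the RAAG. -/
def FullyReduced {V : Type*} (X : SimpleGraph V) {n : ℕ} (s : Fin n → V) (e : Fin n → ℤ) : Prop :=
  (∀ i, e i ≠ 0) ∧ ∀ i j : Fin n, i < j → s i = s j →
    ∃ k : Fin n, i < k ∧ k < j ∧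
      RAAG.of X (s k) * RAAG.of X (s i) ≠ RAAG.of X (s i) * RAAG.of X (s k)

namespace RaagNF

attribute [local instance] Classical.propDecidable

variable {V : Type*} (X : SimpleGraph V)

/-- Letters: a vertex together with a sign (`true` = positive). -/
abbrev L (V : Type*) := V × Bool

/-- Inverse letter. -/
def linv (x : L V) : L V := (x.1, !x.2)

@[simp] lemma linv_linv (x : L V) : linv (linv x) = x := by simp [linv]
@[simp] lemma linv_fst (x : L V) : (linv x).1 = x.1 := rfl

lemma ne_linv_of_fst_ne {x y : L V} (h : y.1 ≠ x.1) : y ≠ linv x := by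
  intro he; exact h (by rw [he]; rfl)

/-- One-step left multiplication by a letter on a list of letters. -/
noncomputable def act (x : L V) : List (L V) → List (L V)
  | [] => [x]
  | y :: t => if y = linv x then t else if X.Adj x.1 y.1 then y :: act x t else x :: y :: t

/-- `Canc x l`: the letter `x` cancels into `l`, i.e. `l = m ++ x⁻¹ :: q` with all of `m`
adjacent to (the vertex of) `x`. -/
def Canc (x : L V) : List (L V) → Prop
  | [] => False
  | y :: t => y = linv x ∨ (X.Adj x.1 y.1 ∧ Canc x t)

@[simp] lemma Canc_nil (x : L V) : Canc X x [] ↔ False := Iff.rfl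
@[simp] lemma Canc_cons (x y : L V) (t : List (L V)) :
    Canc X x (y :: t) ↔ (y = linv x ∨ (X.Adj x.1 y.1 ∧ Canc X x t)) := Iff.rfl

@[simp] lemma act_nil (x : L V) : act X x [] = [x] := rfl
lemma act_cons (x y : L V) (t : List (L V)) :
    act X x (y :: t) =
      if y = linv x then t else if X.Adj x.1 y.1 then y :: act X x t else x :: y :: t := by rw [act]

/-- Reduced lists of letters. -/
inductive Red : List (L V) → Prop
  | nil : Red []
  | cons {x t} : ¬ Canc X x t → Red t → Red (x :: t)

lemma Red_cons_iff {x : L V} {t : List (L V)} :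
    Red X (x :: t) ↔ ¬ Canc X x t ∧ Red X t := by
  constructor
  · rintro (_ | ⟨h1, h2⟩); exact ⟨h1, h2⟩
  · rintro ⟨h1, h2⟩; exact Red.cons h1 h2

lemma Canc_append (x : L V) (p q : List (L V)) :
    Canc X x (p ++ q) ↔ Canc X x p ∨ ((∀ y ∈ p, X.Adj x.1 y.1) ∧ Canc X x q) := by
  induction p with
  | nil => simp
  | cons y t ih => simp [Canc_cons, ih, List.mem_cons]; tauto

lemma Red_append_right {p q : List (L V)} (h : Red X (p ++ q)) : Red X q := by
  induction p with
  | nil => exact h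
  | cons y t ih => exact ih ((Red_cons_iff X).1 h).2

/-- The swap relation: exchange two adjacent commuting letters. -/
def Swap (l l' : List (L V)) : Prop :=
  ∃ p a b q, X.Adj a.1 b.1 ∧ l = p ++ a :: b :: q ∧ l' = p ++ b :: a :: q

/-- Shuffle equivalence. -/
def SE : List (L V) → List (L V) → Prop := Relation.ReflTransGen (Swap X)

lemma Swap.symm {l l'} (h : Swap X l l') : Swap X l' l := by
  obtain ⟨p, a, b, q, hab, h1, h2⟩ := h
  exact ⟨p, b, a, q, X.adj_symm hab, h2, h1⟩

@[refl] lemma SE.refl (l : List (L V)) : SE X l l := Relation.ReflTransGen.refl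

lemma SE.single {l l'} (h : Swap X l l') : SE X l l' := Relation.ReflTransGen.single h

lemma SE.trans {l₁ l₂ l₃} (h : SE X l₁ l₂) (h' : SE X l₂ l₃) : SE X l₁ l₃ :=
  Relation.ReflTransGen.trans h h'

lemma SE.symm {l l'} (h : SE X l l') : SE X l' l := by
  induction h with
  | refl => exact SE.refl X _
  | tail h₁ h₂ ih => exact SE.trans X (SE.single X (Swap.symm X h₂)) ih

lemma SE.cons (x : L V) {t t'} (h : SE X t t') : SE X (x :: t) (x :: t') := by
  refine Relation.ReflTransGen.lift (x :: ·) ?_ _ _ h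
  rintro a b ⟨p, c, d, q, hcd, h1, h2⟩
  exact ⟨x :: p, c, d, q, hcd, by simp [h1], by simp [h2]⟩

lemma SE.length {l l'} (h : SE X l l') : l.length = l'.length := by
  induction h with
  | refl => rfl
  | tail h₁ h₂ ih =>
    obtain ⟨p, a, b, q, hab, e1, e2⟩ := h₂
    rw [ih, e1, e2]; simp

end RaagNF
namespace RaagNF

attribute [local instance] Classical.propDecidable

variable {V : Type*} (X : SimpleGraph V)

lemma act_cons_cancel {x y : L V} (t : List (L V)) (h : y = linv x) :
    act X x (y :: t) = t := by rw [act_cons, if_pos h]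

lemma act_cons_adj {x y : L V} (t : List (L V)) (h1 : y ≠ linv x) (h2 : X.Adj x.1 y.1) :
    act X x (y :: t) = y :: act X x t := by rw [act_cons, if_neg h1, if_pos h2]

lemma act_cons_blocked {x y : L V} (t : List (L V)) (h1 : y ≠ linv x) (h2 : ¬ X.Adj x.1 y.1) :
    act X x (y :: t) = x :: y :: t := by rw [act_cons, if_neg h1, if_neg h2]

lemma act_length_le (x : L V) (l : List (L V)) : (act X x l).length ≤ l.length + 1 := by
  induction l with
  | nil => simp
  | cons y t ih =>
    rw [act_cons]
    split_ifs with h1 h2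
    · simp; omega
    · simpa using Nat.succ_le_succ ih
    · simp

lemma not_canc_of_forall_adj {x : L V} {m : List (L V)}
    (h : ∀ y ∈ m, X.Adj x.1 y.1) : ¬ Canc X x m := by
  induction m with
  | nil => simp
  | cons y t ih =>
    rintro (hy | ⟨_, hc⟩)
    · have := h y (List.mem_cons_self)
      rw [hy, linv_fst] at this
      exact X.irrefl this
    · exact ih (fun z hz => h z (List.mem_cons_of_mem _ hz)) hc

lemma act_of_not_canc {x : L V} {l : List (L V)} (h : ¬ Canc X x l) :
    SE X (act X x l) (x :: l) := by
  induction l with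
  | nil => exact SE.refl X _
  | cons y t ih =>
    rw [Canc_cons] at h
    push_neg at h
    obtain ⟨h1, h2⟩ := h
    by_cases hadj : X.Adj x.1 y.1
    · rw [act_cons_adj X t h1 hadj]
      refine SE.trans X (SE.cons X y (ih (h2 hadj))) ?_
      exact SE.single X ⟨[], y, x, t, X.adj_symm hadj, rfl, rfl⟩
    · rw [act_cons_blocked X t h1 hadj]

lemma act_of_canc {x : L V} {l : List (L V)} (h : Canc X x l) :
    ∃ m q, l = m ++ linv x :: q ∧ (∀ y ∈ m, X.Adj x.1 y.1) ∧ act X x l = m ++ q := by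
  induction l with
  | nil => exact absurd h (by simp)
  | cons y t ih =>
    by_cases h1 : y = linv x
    · exact ⟨[], t, by rw [h1]; rfl, by simp, by rw [act_cons_cancel X t h1]; rfl⟩
    · rcases h with h | ⟨hadj, hc⟩
      · exact absurd h h1
      · obtain ⟨m, q, e1, e2, e3⟩ := ih hc
        refine ⟨y :: m, q, by rw [e1]; rfl, ?_, ?_⟩
        · intro z hz
          rcases List.mem_cons.1 hz with rfl | hz
          · exact hadj
          · exact e2 z hz
        · rw [act_cons_adj X t h1 hadj, e3]; rfl

lemma se_pull_front {w : L V} {m : List (L V)} (q : List (L V))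
    (h : ∀ y ∈ m, X.Adj w.1 y.1) : SE X (m ++ w :: q) (w :: (m ++ q)) := by
  induction m with
  | nil => exact SE.refl X _
  | cons c m' ih =>
    have hc : X.Adj w.1 c.1 := h c (List.mem_cons_self)
    refine SE.trans X (SE.cons X c (ih (fun z hz => h z (List.mem_cons_of_mem _ hz)))) ?_
    exact SE.single X ⟨[], c, w, m' ++ q, X.adj_symm hc, rfl, rfl⟩

lemma canc_act_iff {x y : L V} (hxy : X.Adj x.1 y.1) (l : List (L V)) :
    Canc X y (act X x l) ↔ Canc X y l := by
  have hne : x ≠ linv y := ne_linv_of_fst_ne hxy.ne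
  have hyx : X.Adj y.1 x.1 := X.adj_symm hxy
  induction l with
  | nil => simp [hne, X.irrefl]
  | cons z t ih =>
    by_cases h1 : z = linv x
    · rw [act_cons_cancel X t h1]
      have hz1 : z.1 = x.1 := by rw [h1]; rfl
      have hzy : z ≠ linv y := ne_linv_of_fst_ne (by rw [hz1]; exact hxy.ne)
      simp [Canc_cons, hzy, hz1, hyx]
    · by_cases h2 : X.Adj x.1 z.1
      · rw [act_cons_adj X t h1 h2]
        simp [Canc_cons, ih]
      · rw [act_cons_blocked X t h1 h2]
        simp [Canc_cons, hne, hyx]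

lemma Red.act {l : List (L V)} (x : L V) (h : Red X l) : Red X (act X x l) := by
  induction h with
  | nil => exact Red.cons (by simp) Red.nil
  | @cons y t hy ht ih =>
    by_cases h1 : y = linv x
    · rw [act_cons_cancel X t h1]; exact ht
    · by_cases h2 : X.Adj x.1 y.1
      · rw [act_cons_adj X t h1 h2]
        exact Red.cons (fun hc => hy ((canc_act_iff X h2 t).1 hc)) ih
      · rw [act_cons_blocked X t h1 h2]
        exact Red.cons (by simp [Canc_cons, h1, h2]) (Red.cons hy ht)

lemma act_swap {l l' : List (L V)} (x : L V) (h : Swap X l l') :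
    SE X (act X x l) (act X x l') := by
  obtain ⟨p, a, b, q, hab, rfl, rfl⟩ := h
  induction p with
  | nil =>
    simp only [List.nil_append]
    by_cases h1 : a = linv x
    · have hx1 : x.1 = a.1 := by rw [h1]; rfl
      have hb : b ≠ linv x := ne_linv_of_fst_ne (by rw [hx1]; exact hab.ne')
      have hadjxb : X.Adj x.1 b.1 := hx1 ▸ hab
      rw [act_cons_cancel X (b :: q) h1, act_cons_adj X (a :: q) hb hadjxb,
        act_cons_cancel X q h1]
    · by_cases h2 : b = linv x
      · have hx1 : x.1 = b.1 := by rw [h2]; rfl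
        have ha : a ≠ linv x := ne_linv_of_fst_ne (by rw [hx1]; exact hab.ne)
        have hadjxa : X.Adj x.1 a.1 := hx1 ▸ X.adj_symm hab
        rw [act_cons_adj X (b :: q) ha hadjxa, act_cons_cancel X q h2,
          act_cons_cancel X (a :: q) h2]
      · by_cases h3 : X.Adj x.1 a.1 <;> by_cases h4 : X.Adj x.1 b.1
        · rw [act_cons_adj X (b :: q) h1 h3, act_cons_adj X q h2 h4,
            act_cons_adj X (a :: q) h2 h4, act_cons_adj X q h1 h3]
          exact SE.single X ⟨[], a, b, act X x q, hab, rfl, rfl⟩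
        · rw [act_cons_adj X (b :: q) h1 h3, act_cons_blocked X q h2 h4,
            act_cons_blocked X (a :: q) h2 h4]
          refine SE.trans X (SE.single X ⟨[], a, x, b :: q, X.adj_symm h3, rfl, rfl⟩) ?_
          exact SE.cons X x (SE.single X ⟨[], a, b, q, hab, rfl, rfl⟩)
        · rw [act_cons_blocked X (b :: q) h1 h3, act_cons_adj X (a :: q) h2 h4,
            act_cons_blocked X q h1 h3]
          refine SE.trans X (SE.cons X x (SE.single X ⟨[], a, b, q, hab, rfl, rfl⟩)) ?_
          exact SE.single X ⟨[], x, b, a :: q, h4, rfl, rfl⟩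
        · rw [act_cons_blocked X (b :: q) h1 h3, act_cons_blocked X (a :: q) h2 h4]
          exact SE.cons X x (SE.single X ⟨[], a, b, q, hab, rfl, rfl⟩)
  | cons c p' ih =>
    simp only [List.cons_append]
    by_cases hc1 : c = linv x
    · rw [act_cons_cancel X _ hc1, act_cons_cancel X _ hc1]
      exact SE.single X ⟨p', a, b, q, hab, rfl, rfl⟩
    · by_cases hc2 : X.Adj x.1 c.1
      · rw [act_cons_adj X _ hc1 hc2, act_cons_adj X _ hc1 hc2]
        exact SE.cons X c ih
      · rw [act_cons_blocked X _ hc1 hc2, act_cons_blocked X _ hc1 hc2]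
        exact SE.cons X x (SE.cons X c (SE.single X ⟨p', a, b, q, hab, rfl, rfl⟩))

lemma act_se {l l' : List (L V)} (x : L V) (h : SE X l l') :
    SE X (act X x l) (act X x l') := by
  induction h with
  | refl => exact SE.refl X _
  | tail h₁ h₂ ih => exact SE.trans X ih (act_swap X x h₂)

lemma canc_swap {z : L V} {l l' : List (L V)} (h : Swap X l l') :
    Canc X z l → Canc X z l' := by
  obtain ⟨p, a, b, q, hab, rfl, rfl⟩ := h
  induction p with
  | nil =>
    rintro (ha | ⟨hza, (hb | ⟨hzb, hq⟩)⟩)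
    · have hzb : X.Adj z.1 b.1 := by
        have : z.1 = a.1 := by rw [ha]; rfl
        rw [this]; exact hab
      exact Or.inr ⟨hzb, Or.inl ha⟩
    · exact Or.inl hb
    · exact Or.inr ⟨hzb, Or.inr ⟨hza, hq⟩⟩
  | cons c p' ih =>
    rintro (hc | ⟨hzc, hrest⟩)
    · exact Or.inl hc
    · exact Or.inr ⟨hzc, ih hrest⟩

lemma canc_se {z : L V} {l l' : List (L V)} (h : SE X l l') :
    Canc X z l ↔ Canc X z l' := by
  induction h with
  | refl => rfl
  | tail h₁ h₂ ih => exact ih.trans ⟨canc_swap X h₂, canc_swap X (Swap.symm X h₂)⟩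

lemma act_act_linv {x : L V} {l : List (L V)} (hred : Red X l) :
    SE X (act X x (act X (linv x) l)) l := by
  by_cases hc : Canc X (linv x) l
  · obtain ⟨m, q, hl, hadj, ha⟩ := act_of_canc X hc
    rw [linv_linv] at hl
    have hadj' : ∀ y ∈ m, X.Adj x.1 y.1 := by simpa using hadj
    have h1 : ¬ Canc X x (m ++ q) := by
      rw [Canc_append]
      rintro (h | ⟨_, hq⟩)
      · exact not_canc_of_forall_adj X hadj' h
      · have := Red_append_right X (p := m) (hl ▸ hred)
        exact ((Red_cons_iff X).1 this).1 hq
    rw [ha]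
    refine SE.trans X (act_of_not_canc X h1) ?_
    refine SE.symm X ?_
    rw [hl]
    exact se_pull_front X q hadj'
  · have h1 : SE X (act X (linv x) l) (linv x :: l) := act_of_not_canc X hc
    refine SE.trans X (act_se X x h1) ?_
    rw [act_cons_cancel X l rfl]

lemma act_comm {x y : L V} (hxy : X.Adj x.1 y.1) (l : List (L V)) :
    SE X (act X x (act X y l)) (act X y (act X x l)) := by
  have hne : x.1 ≠ y.1 := hxy.ne
  have hyx : X.Adj y.1 x.1 := X.adj_symm hxy
  have hxny : x ≠ linv y := ne_linv_of_fst_ne hne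
  have hynx : y ≠ linv x := ne_linv_of_fst_ne hne.symm
  induction l with
  | nil =>
    rw [act_nil, act_nil, act_cons_adj X [] hynx hxy, act_cons_adj X [] hxny hyx,
      act_nil, act_nil]
    exact SE.single X ⟨[], y, x, [], hyx, rfl, rfl⟩
  | cons z t ih =>
    by_cases hzx : z = linv x
    · have hz1 : z.1 = x.1 := by rw [hzx]; rfl
      have hzy : z ≠ linv y := ne_linv_of_fst_ne (by rw [hz1]; exact hne)
      have hadjyz : X.Adj y.1 z.1 := by rw [hz1]; exact hyx
      rw [act_cons_adj X t hzy hadjyz, act_cons_cancel X (act X y t) hzx,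
        act_cons_cancel X t hzx]
    · by_cases hzy : z = linv y
      · have hz1 : z.1 = y.1 := by rw [hzy]; rfl
        have hadjxz : X.Adj x.1 z.1 := by rw [hz1]; exact hxy
        rw [act_cons_cancel X t hzy, act_cons_adj X t hzx hadjxz,
          act_cons_cancel X (act X x t) hzy]
      · by_cases hxz : X.Adj x.1 z.1 <;> by_cases hyz : X.Adj y.1 z.1
        · rw [act_cons_adj X t hzy hyz, act_cons_adj X (act X y t) hzx hxz,
            act_cons_adj X t hzx hxz, act_cons_adj X (act X x t) hzy hyz]
          exact SE.cons X z ih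
        · rw [act_cons_blocked X t hzy hyz, act_cons_adj X (z :: t) hynx hxy,
            act_cons_adj X t hzx hxz, act_cons_blocked X (act X x t) hzy hyz]
        · rw [act_cons_adj X t hzy hyz, act_cons_blocked X (act X y t) hzx hxz,
            act_cons_blocked X t hzx hxz, act_cons_adj X (z :: t) hxny hyx,
            act_cons_adj X t hzy hyz]
        · rw [act_cons_blocked X t hzy hyz, act_cons_adj X (z :: t) hynx hxy,
            act_cons_blocked X t hzx hxz,
            act_cons_adj X (z :: t) hxny hyx, act_cons_blocked X t hzy hyz]
          exact SE.single X ⟨[], y, x, z :: t, hyx, rfl, rfl⟩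

end RaagNF
namespace RaagNF

attribute [local instance] Classical.propDecidable

variable {V : Type*} (X : SimpleGraph V)

/-- Reduced lists. -/
def RedL := {l : List (L V) // Red X l}

instance setoidRedL : Setoid (RedL X) :=
  ⟨fun a b => SE X a.1 b.1, fun _ => SE.refl X _,
   fun h => SE.symm X h, fun h h' => SE.trans X h h'⟩

/-- Reduced lists up to shuffle equivalence. -/
def Q := Quotient (setoidRedL X)

noncomputable def actQ (x : L V) : Q X → Q X :=
  Quotient.map (fun l : RedL X => (⟨act X x l.1, Red.act X x l.2⟩ : RedL X))
    (fun _ _ h => act_se X x h)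

lemma actQ_mk (x : L V) (l : RedL X) :
    actQ X x ⟦l⟧ = ⟦(⟨act X x l.1, Red.act X x l.2⟩ : RedL X)⟧ := rfl

noncomputable def permL (x : L V) : Equiv.Perm (Q X) where
  toFun := actQ X x
  invFun := actQ X (linv x)
  left_inv := by
    intro q
    induction q using Quotient.inductionOn with
    | h l =>
      refine Quotient.sound ?_
      have h := act_act_linv X (x := linv x) l.2
      rwa [linv_linv] at h
  right_inv := by
    intro q
    induction q using Quotient.inductionOn with
    | h l => exact Quotient.sound (act_act_linv X l.2)

noncomputable def P (v : V) : Equiv.Perm (Q X) := permL X (v, true)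

lemma P_comm {u v : V} (h : X.Adj u v) : P X u * P X v = P X v * P X u := by
  ext q
  induction q using Quotient.inductionOn with
  | h l =>
    show actQ X (u, true) (actQ X (v, true) ⟦l⟧) = actQ X (v, true) (actQ X (u, true) ⟦l⟧)
    exact Quotient.sound (act_comm X (x := (u, true)) (y := (v, true)) h l.1)

lemma relsP : ∀ r ∈ raagRels X, FreeGroup.lift (P X) r = 1 := by
  rintro r ⟨u, v, huv, rfl⟩
  simp only [map_mul, map_inv, FreeGroup.lift_apply_of]
  rw [P_comm X huv]
  group

/-- The action of the RAAG on shuffle classes of reduced words. -/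
noncomputable def phi : PresentedGroup (raagRels X) →* Equiv.Perm (Q X) :=
  PresentedGroup.toGroup (relsP X)

lemma phi_of (v : V) : phi X (RAAG.of X v) = P X v := PresentedGroup.toGroup.of (relsP X)

lemma phi_mul (a b : RAAG X) : phi X (a * b) = phi X a * phi X b := map_mul (phi X) a b
lemma phi_inv (a : RAAG X) : phi X a⁻¹ = (phi X a)⁻¹ := map_inv (phi X) a
lemma phi_one : phi X (1 : RAAG X) = 1 := map_one (phi X)

def base : Q X := ⟦(⟨[], Red.nil⟩ : RedL X)⟧

noncomputable def qlen : Q X → ℕ :=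
  Quotient.lift (fun l : RedL X => l.1.length) (fun _ _ h => SE.length X h)

lemma qlen_actQ_le (x : L V) (q : Q X) : qlen X (actQ X x q) ≤ qlen X q + 1 := by
  induction q using Quotient.inductionOn with
  | h l => exact act_length_le X x l.1

lemma phi_of_apply (v : V) (q : Q X) : phi X (RAAG.of X v) q = actQ X (v, true) q := by
  rw [phi_of]; rfl

lemma phi_of_inv_apply (v : V) (q : Q X) :
    phi X (RAAG.of X v)⁻¹ q = actQ X (v, false) q := by
  rw [phi_inv, phi_of]; rfl

lemma qlen_step {g : RAAG X}
    (hg : g ∈ Set.range (RAAG.of X) ∨ g⁻¹ ∈ Set.range (RAAG.of X)) (q : Q X) :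
    qlen X (phi X g q) ≤ qlen X q + 1 := by
  rcases hg with ⟨v, rfl⟩ | ⟨v, hv⟩
  · rw [phi_of_apply]; exact qlen_actQ_le X _ q
  · have hg : g = (RAAG.of X v)⁻¹ := by rw [hv, inv_inv]
    rw [hg]; exact (congrArg (qlen X) (phi_of_inv_apply X v q)).le.trans (qlen_actQ_le X _ q)

lemma qlen_prod_le (lst : List (RAAG X))
    (hv : ∀ g ∈ lst, g ∈ Set.range (RAAG.of X) ∨ g⁻¹ ∈ Set.range (RAAG.of X)) (q : Q X) :
    qlen X (phi X lst.prod q) ≤ qlen X q + lst.length := by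
  induction lst with
  | nil =>
    rw [List.prod_nil, phi_one]
    simp
  | cons g t ih =>
    rw [List.prod_cons, phi_mul, Equiv.Perm.mul_apply]
    calc qlen X (phi X g (phi X t.prod q)) ≤ qlen X (phi X t.prod q) + 1 :=
          qlen_step X (hv g (List.mem_cons_self)) _
      _ ≤ (qlen X q + t.length) + 1 :=
          Nat.succ_le_succ (ih (fun z hz => hv z (List.mem_cons_of_mem _ hz)))
      _ = qlen X q + (g :: t).length := by simp [Nat.add_assoc]

/-- The RAAG element corresponding to a letter. -/
noncomputable def mkL (x : L V) : RAAG X := cond x.2 (RAAG.of X x.1) (RAAG.of X x.1)⁻¹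

lemma mkL_valid (x : L V) :
    mkL X x ∈ Set.range (RAAG.of X) ∨ (mkL X x)⁻¹ ∈ Set.range (RAAG.of X) := by
  obtain ⟨v, b⟩ := x
  cases b
  · right; exact ⟨v, by show RAAG.of X v = ((RAAG.of X v)⁻¹)⁻¹; rw [inv_inv]⟩
  · left; exact ⟨v, rfl⟩

lemma phi_mkL_apply (x : L V) (q : Q X) : phi X (mkL X x) q = actQ X x q := by
  obtain ⟨v, b⟩ := x
  cases b
  · exact phi_of_inv_apply X v q
  · exact phi_of_apply X v q

lemma phi_listmk (M : List (L V)) (q : Q X) :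
    phi X ((M.map (mkL X)).prod) q = M.foldr (fun x r => actQ X x r) q := by
  induction M with
  | nil => rw [List.map_nil, List.prod_nil, phi_one]; rfl
  | cons x t ih =>
    rw [List.map_cons, List.prod_cons, phi_mul, Equiv.Perm.mul_apply, ih,
      List.foldr_cons, phi_mkL_apply]

lemma foldr_act_red (M : List (L V)) : Red X (M.foldr (act X) []) := by
  induction M with
  | nil => exact Red.nil
  | cons x t ih => exact Red.act X x ih

lemma foldr_act_se {M : List (L V)} (h : Red X M) : SE X (M.foldr (act X) []) M := by
  induction M with
  | nil => exact SE.refl X _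
  | cons x t ih =>
    obtain ⟨hc, ht⟩ := (Red_cons_iff X).1 h
    have hse := ih ht
    have hc' : ¬ Canc X x (t.foldr (act X) []) := fun c => hc ((canc_se X hse).1 c)
    rw [List.foldr_cons]
    exact SE.trans X (act_of_not_canc X hc') (SE.cons X x hse)

lemma foldQ (M : List (L V)) :
    M.foldr (fun x q => actQ X x q) (base X) = ⟦(⟨M.foldr (act X) [], foldr_act_red X M⟩ : RedL X)⟧ := by
  induction M with
  | nil => rfl
  | cons x t ih => rw [List.foldr_cons, ih]; rfl

lemma qlen_foldr (M : List (L V)) (h : Red X M) :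
    qlen X (M.foldr (fun x q => actQ X x q) (base X)) = M.length := by
  rw [foldQ]
  exact SE.length X (foldr_act_se X h)

end RaagNF
namespace RaagNF

attribute [local instance] Classical.propDecidable

variable {V : Type*} (X : SimpleGraph V)

def block (v : V) (k : ℤ) : List (L V) := List.replicate k.natAbs (v, decide (0 < k))

def expand {n : ℕ} (s : Fin n → V) (e : Fin n → ℤ) : List (L V) :=
  (List.ofFn fun i => block (s i) (e i)).flatten

lemma canc_replicate {x y : L V} {k : ℕ} (h : Canc X x (List.replicate k y)) : y = linv x := by
  induction k with
  | zero => simp at h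
  | succ k ih =>
    rw [List.replicate_succ] at h
    rcases h with h | ⟨_, hc⟩
    · exact h
    · exact ih hc

lemma red_replicate_append {x : L V} {t : List (L V)} (k : ℕ)
    (hnc : ¬ Canc X x t) (ht : Red X t) : Red X (List.replicate k x ++ t) := by
  induction k with
  | zero => exact ht
  | succ k ih =>
    rw [List.replicate_succ, List.cons_append]
    refine Red.cons ?_ ih
    rw [Canc_append]
    rintro (h | ⟨_, h⟩)
    · have h2 := congrArg Prod.snd (canc_replicate X h)
      simp [linv] at h2
    · exact hnc h

lemma canc_flatten_ofFn {n : ℕ} {g : Fin n → List (L V)} {x : L V}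
    (h : Canc X x (List.ofFn g).flatten) :
    ∃ j : Fin n, Canc X x (g j) ∧ ∀ k < j, ∀ y ∈ g k, X.Adj x.1 y.1 := by
  induction n with
  | zero => simp at h
  | succ n ih =>
    rw [List.ofFn_succ, List.flatten_cons, Canc_append] at h
    rcases h with h | ⟨hadj, h⟩
    · refine ⟨0, h, ?_⟩
      intro k hk
      exact absurd hk (Fin.not_lt_zero k)
    · obtain ⟨j, hj1, hj2⟩ := ih (g := fun i => g i.succ) h
      refine ⟨j.succ, hj1, ?_⟩
      intro k hk y hy
      induction k using Fin.cases with
      | zero => exact hadj y hy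
      | succ k' => exact hj2 k' (Fin.succ_lt_succ_iff.1 hk) y hy

lemma red_expand {n : ℕ} {s : Fin n → V} {e : Fin n → ℤ}
    (he : ∀ i, e i ≠ 0)
    (hfr : ∀ i j : Fin n, i < j → s i = s j → ∃ k, i < k ∧ k < j ∧ ¬ X.Adj (s k) (s i)) :
    Red X (expand s e) := by
  induction n with
  | zero =>
    have : expand s e = [] := by simp [expand]
    rw [this]; exact Red.nil
  | succ n ih =>
    rw [expand, List.ofFn_succ, List.flatten_cons]
    have hrest : Red X (expand (fun i => s i.succ) (fun i => e i.succ)) := by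
      refine ih (fun i => he _) ?_
      intro i j hij hsij
      obtain ⟨k, hk1, hk2, hk3⟩ := hfr i.succ j.succ (Fin.succ_lt_succ_iff.2 hij) hsij
      have hk0 : k ≠ 0 := by
        intro hk0
        rw [hk0] at hk1
        exact absurd hk1 (Fin.not_lt_zero _).elim
      obtain ⟨k', rfl⟩ := Fin.exists_succ_eq.2 hk0
      exact ⟨k', Fin.succ_lt_succ_iff.1 hk1, Fin.succ_lt_succ_iff.1 hk2, hk3⟩
    have hnc : ¬ Canc X (s 0, decide (0 < e 0)) (expand (fun i => s i.succ) (fun i => e i.succ)) := by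
      intro hc
      obtain ⟨j, hj1, hj2⟩ := canc_flatten_ofFn X hc
      have hsj : s j.succ = s 0 := by
        have := canc_replicate X hj1
        exact congrArg Prod.fst this
      obtain ⟨k, hk1, hk2, hk3⟩ := hfr 0 j.succ (Fin.succ_pos j) hsj.symm
      have hk0 : k ≠ 0 := Fin.pos_iff_ne_zero.1 hk1
      obtain ⟨k', rfl⟩ := Fin.exists_succ_eq.2 hk0
      have hmem : (s k'.succ, decide (0 < e k'.succ)) ∈ block (s k'.succ) (e k'.succ) := by
        rw [block, List.mem_replicate]
        exact ⟨by simpa using Int.natAbs_ne_zero.2 (he k'.succ), rfl⟩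
      have := hj2 k' (Fin.succ_lt_succ_iff.1 hk2) _ hmem
      exact hk3 (X.adj_symm this)
    exact red_replicate_append X _ hnc hrest

lemma length_expand {n : ℕ} (s : Fin n → V) (e : Fin n → ℤ) :
    (expand s e).length = ∑ i : Fin n, (e i).natAbs := by
  rw [expand, List.length_flatten, List.map_ofFn]
  rw [List.sum_ofFn]
  refine Finset.sum_congr rfl fun i _ => ?_
  simp [block]

lemma prod_block (v : V) (k : ℤ) :
    ((block v k).map (mkL X)).prod = RAAG.of X v ^ k := by
  rw [block, List.map_replicate, List.prod_replicate]
  by_cases hk : 0 < k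
  · have h1 : mkL X (v, decide (0 < k)) = RAAG.of X v := by simp [mkL, hk]
    rw [h1, ← zpow_natCast]
    congr 1
    omega
  · have h1 : mkL X (v, decide (0 < k)) = (RAAG.of X v)⁻¹ := by simp [mkL, hk]
    rw [h1, inv_pow, ← zpow_natCast, ← zpow_neg]
    congr 1
    omega

lemma prod_expand {n : ℕ} (s : Fin n → V) (e : Fin n → ℤ) :
    ((expand s e).map (mkL X)).prod = (List.ofFn fun i => RAAG.of X (s i) ^ e i).prod := by
  rw [expand, List.map_flatten, List.prod_flatten, List.map_ofFn, List.map_ofFn]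
  have h1 : (List.prod ∘ List.map (mkL X) ∘ fun i => block (s i) (e i)) =
      fun i => RAAG.of X (s i) ^ e i := funext fun i => prod_block X (s i) (e i)
  rw [h1]

lemma adj_commute {u v : V} (h : X.Adj u v) :
    RAAG.of X u * RAAG.of X v = RAAG.of X v * RAAG.of X u := by
  have h1 : (RAAG.of X u * RAAG.of X v * (RAAG.of X u)⁻¹ * (RAAG.of X v)⁻¹ : RAAG X) = 1 := by
    show PresentedGroup.mk (raagRels X)
        (FreeGroup.of u * FreeGroup.of v * (FreeGroup.of u)⁻¹ * (FreeGroup.of v)⁻¹) = 1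
    exact (QuotientGroup.eq_one_iff _).2 (Subgroup.subset_normalClosure ⟨u, v, h, rfl⟩)
  have h2 := commutatorElement_eq_one_iff_commute.1 h1
  exact h2.eq

end RaagNF
theorem wordNorm_fullyReduced {V : Type*} [Fintype V] (X : SimpleGraph V) {n : ℕ}
    (s : Fin n → V) (e : Fin n → ℤ) (h : FullyReduced X s e) (w : RAAG X)
    (hw : w = (List.ofFn fun i => RAAG.of X (s i) ^ e i).prod) :
    wordNorm (Set.range (RAAG.of X)) w = ∑ i : Fin n, (e i).natAbs := by
  classical
  obtain ⟨he, hcomm⟩ := h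
  have hfr : ∀ i j : Fin n, i < j → s i = s j → ∃ k, i < k ∧ k < j ∧ ¬ X.Adj (s k) (s i) := by
    intro i j hij hs
    obtain ⟨k, hk1, hk2, hk3⟩ := hcomm i j hij hs
    exact ⟨k, hk1, hk2, fun hadj => hk3 (RaagNF.adj_commute X hadj)⟩
  set M := RaagNF.expand s e with hM
  have hred : RaagNF.Red X M := RaagNF.red_expand X he hfr
  have hprodM : ((M.map (RaagNF.mkL X)).prod : RAAG X) = w := by
    rw [hw, hM]; exact RaagNF.prod_expand X s e
  have hlenM : M.length = ∑ i : Fin n, (e i).natAbs := RaagNF.length_expand s e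
  have hval : RaagNF.qlen X (RaagNF.phi X w (RaagNF.base X)) = M.length := by
    rw [← hprodM, RaagNF.phi_listmk]
    exact RaagNF.qlen_foldr X M hred
  have hmem : (∑ i : Fin n, (e i).natAbs) ∈
      {m | ∃ l : List (RAAG X), l.length = m ∧
        (∀ x ∈ l, x ∈ Set.range (RAAG.of X) ∨ x⁻¹ ∈ Set.range (RAAG.of X)) ∧ l.prod = w} := by
    refine ⟨M.map (RaagNF.mkL X), by rw [List.length_map, hlenM], ?_, hprodM⟩
    intro x hx
    obtain ⟨y, _, rfl⟩ := List.mem_map.1 hx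
    exact RaagNF.mkL_valid X y
  rw [wordNorm]
  refine le_antisymm (Nat.sInf_le hmem) (le_csInf ⟨_, hmem⟩ ?_)
  rintro m ⟨l, rfl, hvalid, hprod⟩
  have hle := RaagNF.qlen_prod_le X l hvalid (RaagNF.base X)
  rw [hprod] at hle
  have hb : RaagNF.qlen X (RaagNF.base X) = 0 := rfl
  omega
end

section
/- Let X be a finite graph and let s₁^{e₁} ⋯ s_n^{e_n} be a fully reduced word in A_X. Then the element s₁ s₂ ⋯ s_n of the right-angled Artin monoid M_X is square-free, i.e. it cannot be written as a word in the vertex generators of M_X in which two consecutive letters are equal. -/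
/-!
Call a positive word fully reduced if between any two occurrences of a letter `a` there is a
letter not adjacent to `a`. Deleting all letters outside an independent set of `X` is invariant
under the relations of `M_X`, and this makes full reducedness an invariant of `M_X`: if a word
`l` had a gap between two consecutive copies of `a` consisting of neighbours of `a`, then in an
equivalent fully reduced word `w` the gap between the corresponding copies of `a` contains some
`b` not adjacent to `a`, and projecting `l` and `w` to `{a, b}` gives different words. A square
`a a` is an empty such gap, and `s₁ ⋯ s_n` is fully reduced because neighbours commute in `A_X`.
-/

/-- The positive-word form of `FullyReduced`, non-commutation being read off as non-adjacency. -/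
def IsFullyReducedWord {V : Type*} (X : SimpleGraph V) (w : List V) : Prop :=
  ∀ z₀ z₁ z₂ a, w = z₀ ++ a :: z₁ ++ a :: z₂ → ∃ b ∈ z₁, ¬X.Adj a b

namespace List

variable {α : Type*} [DecidableEq α] {a : α}

theorem exists_eq_append_cons_of_lt_count {z : List α} {r : ℕ} (h : r < z.count a) :
    ∃ z₀ z', z = z₀ ++ a :: z' ∧ z₀.count a = r := by
  induction z generalizing r with
  | nil => simp at h
  | cons c t ih =>
    by_cases hca : c = a
    · subst hca
      cases r with
      | zero => exact ⟨[], t, rfl, rfl⟩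
      | succ r =>
        obtain ⟨z₀, z', rfl, hz₀⟩ := ih (r := r) (by simpa using h)
        exact ⟨c :: z₀, z', rfl, by simp [hz₀]⟩
    · obtain ⟨z₀, z', rfl, hz₀⟩ := ih (r := r) (by simpa [count_cons, hca] using h)
      exact ⟨c :: z₀, z', rfl, by simp [hca, hz₀]⟩

theorem prefix_eq_of_append_cons_eq_of_count_eq {x₀ y₀ x y : List α}
    (h : x₀ ++ a :: x = y₀ ++ a :: y) (hc : x₀.count a = y₀.count a) : x₀ = y₀ := by
  induction x₀ generalizing y₀ with
  | nil =>
    cases y₀ with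
    | nil => rfl
    | cons d t =>
      obtain ⟨rfl, -⟩ := cons_eq_cons.mp h
      simp at hc
  | cons c t ih =>
    cases y₀ with
    | nil =>
      obtain ⟨rfl, -⟩ := cons_eq_cons.mp h
      simp at hc
    | cons d t' =>
      obtain ⟨rfl, ht⟩ := cons_eq_cons.mp h
      rw [ih ht (by simpa [count_cons] using hc)]

theorem gap_eq_of_count_eq {x₀ x₁ x₂ y₀ y₁ y₂ : List α}
    (h : x₀ ++ a :: x₁ ++ a :: x₂ = y₀ ++ a :: y₁ ++ a :: y₂)
    (hc : x₀.count a = y₀.count a) (hx : a ∉ x₁) (hy : a ∉ y₁) : x₁ = y₁ := by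
  simp only [append_assoc, cons_append] at h
  obtain rfl := prefix_eq_of_append_cons_eq_of_count_eq h hc
  exact prefix_eq_of_append_cons_eq_of_count_eq (cons_injective (append_cancel_left h))
    (by simp [count_eq_zero.mpr hx, count_eq_zero.mpr hy])

end List

section

variable {V : Type*} {X : SimpleGraph V}

theorem RAAG.of_mul_of_comm_of_adj {x y : V} (hxy : X.Adj x y) :
    RAAG.of X x * RAAG.of X y = RAAG.of X y * RAAG.of X x := by
  have hrel : (PresentedGroup.mk (raagRels X))
      (FreeGroup.of x * FreeGroup.of y * (FreeGroup.of x)⁻¹ * (FreeGroup.of y)⁻¹) = 1 :=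
    (QuotientGroup.eq_one_iff _).mpr (Subgroup.subset_normalClosure ⟨x, y, hxy, rfl⟩)
  simp only [map_mul, map_inv] at hrel
  exact commutatorElement_eq_one_iff_mul_comm.mp hrel

def FreeMonoid.filterHom (p : V → Bool) : FreeMonoid V →* FreeMonoid V where
  toFun w := FreeMonoid.ofList (w.toList.filter p)
  map_one' := rfl
  map_mul' a b := by simp [List.filter_append]

theorem filter_eq_of_raamCon {p : V → Bool} (hp : ∀ x y, p x = true → p y = true → ¬X.Adj x y)
    {a b : FreeMonoid V} (hab : raamCon X a b) : a.toList.filter p = b.toList.filter p := by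
  suffices raamCon X ≤ Con.ker (FreeMonoid.filterHom p) from
    congrArg FreeMonoid.toList ((Con.ker_rel _).mp (this hab))
  refine Con.conGen_le.mpr ?_
  rintro _ _ ⟨x, y, hxy, rfl, rfl⟩
  show FreeMonoid.ofList ([x, y].filter p) = FreeMonoid.ofList ([y, x].filter p)
  cases hx : p x <;> cases hy : p y
  case true.true => exact absurd hxy (hp x y hx hy)
  all_goals simp [hx, hy]

theorem IsFullyReducedWord.of_raamCon {l w : List V}
    (hlw : raamCon X (FreeMonoid.ofList l) (FreeMonoid.ofList w))
    (hw : IsFullyReducedWord X w) : IsFullyReducedWord X l := by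
  classical
  intro u x v a hl
  by_contra! hx
  have hax : a ∉ x := fun ha => (hx a ha).ne rfl
  have hfilter {p : V → Bool} (hp : ∀ x y, p x = true → p y = true → ¬X.Adj x y) :
      l.filter p = w.filter p := by
    simpa using filter_eq_of_raamCon hp hlw
  have hcount : l.count a = w.count a := by
    simp only [List.count_eq_length_filter]
    rw [hfilter (p := (· == a)) (by simp +contextual [SimpleGraph.irrefl])]
  obtain ⟨z₀, w', rfl, hz₀⟩ : ∃ z₀ w', w = z₀ ++ a :: w' ∧ z₀.count a = u.count a :=
    List.exists_eq_append_cons_of_lt_count (by simp [← hcount, hl])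
  obtain ⟨z₁, z₂, rfl, hz₁⟩ : ∃ z₁ z₂, w' = z₁ ++ a :: z₂ ∧ z₁.count a = 0 :=
    List.exists_eq_append_cons_of_lt_count (by simp [hl, hz₀] at hcount; omega)
  obtain ⟨b, hbz, hab⟩ := hw z₀ z₁ z₂ a (by simp)
  -- `{a, b}` is independent, so both words keep the same gap between these two copies of `a`.
  set p : V → Bool := fun y => y == a || y == b
  have hp : ∀ x y, p x = true → p y = true → ¬X.Adj x y := by
    simp only [p, Bool.or_eq_true, beq_iff_eq]
    rintro x y (rfl | rfl) (rfl | rfl)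
    exacts [X.irrefl, hab, fun h => hab h.symm, X.irrefl]
  have hgap : x.filter p = z₁.filter p := by
    have hpa : p a = true := by simp [p]
    refine List.gap_eq_of_count_eq (a := a) (x₀ := u.filter p) (y₀ := z₀.filter p)
      (x₂ := v.filter p) (y₂ := z₂.filter p) ?_ ?_ ?_ ?_
    · simpa [hl, hpa, List.filter_append] using hfilter hp
    · rw [List.count_filter hpa, List.count_filter hpa, hz₀]
    · exact fun h => hax (List.mem_of_mem_filter h)
    · exact fun h => List.count_eq_zero.mp hz₁ (List.mem_of_mem_filter h)
  have hbx : b ∈ x.filter p := hgap ▸ List.mem_filter.mpr ⟨hbz, by simp [p]⟩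
  exact hab (hx b (List.mem_of_mem_filter hbx))

theorem IsFullyReducedWord.isChain_ne {l : List V} (hl : IsFullyReducedWord X l) :
    l.IsChain (· ≠ ·) := by
  refine List.isChain_iff_forall_rel_of_append_cons_cons.mpr ?_
  rintro a _ l₁ l₂ rfl rfl
  simpa using hl l₁ [] l₂ a (by simp)

theorem FullyReduced.isFullyReducedWord_ofFn {n : ℕ} {s : Fin n → V} {e : Fin n → ℤ}
    (h : FullyReduced X s e) : IsFullyReducedWord X (List.ofFn s) := by
  intro z₀ z₁ z₂ a hw
  have hn : n = z₀.length + z₁.length + z₂.length + 2 := by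
    simpa [add_assoc, add_comm, add_left_comm] using congrArg List.length hw
  have hs (m : ℕ) (hm : m < n) :
      s ⟨m, hm⟩ = (z₀ ++ a :: z₁ ++ a :: z₂)[m]'(by simp; omega) := by
    simp only [← hw, List.getElem_ofFn]
  obtain ⟨k, hik, hkj, hk⟩ := h.2 ⟨z₀.length, by omega⟩ ⟨z₀.length + z₁.length + 1, by omega⟩
    (by simp) (by simp [hs, add_assoc])
  have hsk : s k ∈ z₁ := by
    obtain ⟨m, hm⟩ : ∃ m, k.val = z₀.length + (m + 1) := ⟨k - z₀.length - 1, by grind⟩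
    have hmz : m < z₁.length := by grind
    simp [hs k k.2, hm, List.getElem_append_left hmz]
  have hsi : s ⟨z₀.length, by omega⟩ = a := by simp [hs]
  rw [hsi] at hk
  exact ⟨s k, hsk, fun hadj => hk (RAAG.of_mul_of_comm_of_adj hadj.symm)⟩

end

theorem fullyReduced_squareFree_general {V : Type*} (X : SimpleGraph V) {n : ℕ}
    (s : Fin n → V) (e : Fin n → ℤ) (h : FullyReduced X s e) :
    ∀ l : List V, RAAM.mk X l = RAAM.mk X (List.ofFn s) → l.Chain' (· ≠ ·) := by
  intro l hl
  exact (h.isFullyReducedWord_ofFn.of_raamCon ((raamCon X).eq.mp hl)).isChain_ne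

theorem fullyReduced_squareFree {V : Type*} [Fintype V] (X : SimpleGraph V) {n : ℕ}
    (s : Fin n → V) (e : Fin n → ℤ) (h : FullyReduced X s e) :
    ∀ l : List V, RAAM.mk X l = RAAM.mk X (List.ofFn s) → l.Chain' (· ≠ ·) :=
  fullyReduced_squareFree_general X s e h
end

section
/- Let X be a finite graph. The natural monoid homomorphism from the right-angled Artin monoid M_X to the right-angled Artin group A_X (sending each generator to the corresponding generator) is injective. -/
/-!
Positive words in a free group are reduced, so they are determined by their image. For an
independent set `s` of `X`, no defining relator involves two letters of `s`, so killing the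
generators outside `s` maps `A_X` onto the free group on `s`; hence the image in `A_X` of a
positive word `w` determines its subword `w|ₛ` of letters in `s`.
Conversely, two positive words `a :: t` and `w` with the same subwords `·|ₛ` for all independent
sets are equal in `M_X`: `a` occurs in `w`, and every letter `b` before its first occurrence is
adjacent to `a`, since otherwise `(a :: t)|_{a,b}` and `w|_{a,b}` would start with different
letters. So `a` can be moved to the front of `w`, and we conclude by induction on the length.
-/

open scoped commutatorElement

theorem FreeGroup.isReduced_map_true {α : Type*} (l : List α) :
    FreeGroup.IsReduced (l.map (·, true)) :=
  List.isChain_map_of_isChain _ (fun _ _ _ _ => rfl)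
    (List.pairwise_of_forall fun _ _ => trivial).isChain

theorem FreeGroup.mk_map_true_injective {α : Type*} :
    Function.Injective fun l : List α => FreeGroup.mk (l.map (·, true)) := by
  classical
  intro l₁ l₂ h
  have h' := congrArg FreeGroup.toWord h
  simp only [FreeGroup.toWord_mk, (FreeGroup.isReduced_map_true _).reduce_eq] at h'
  exact List.map_injective_iff.mpr (fun _ _ h => congrArg Prod.fst h) h'

section

variable {V : Type*} {X : SimpleGraph V}

namespace RAAG

theorem of_mul_of_comm {x y : V} (h : X.Adj x y) :
    RAAG.of X x * RAAG.of X y = RAAG.of X y * RAAG.of X x := by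
  rw [← commutatorElement_eq_one_iff_mul_comm, commutatorElement_def]
  exact PresentedGroup.one_of_mem ⟨x, y, h, rfl⟩

variable [DecidableEq V] {s : Finset V}

def toFreeGroup (hs : X.IsIndepSet s) : RAAG X →* FreeGroup V :=
  PresentedGroup.toGroup (f := fun c => if c ∈ s then FreeGroup.of c else 1) <| by
    rintro _ ⟨x, y, hxy, rfl⟩
    have hcomm : Commute (if x ∈ s then FreeGroup.of x else 1)
        (if y ∈ s then FreeGroup.of y else 1) := by
      by_cases hx : x ∈ s
      · by_cases hy : y ∈ s
        · exact absurd hxy (hs hx hy hxy.ne)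
        · simp [hy]
      · simp [hx]
    simp only [map_mul, map_inv, FreeGroup.lift_apply_of, hcomm.eq, mul_inv_cancel_right,
      mul_inv_cancel]

theorem toFreeGroup_of (hs : X.IsIndepSet s) (c : V) :
    toFreeGroup hs (RAAG.of X c) = if c ∈ s then FreeGroup.of c else 1 :=
  PresentedGroup.toGroup.of _

end RAAG

namespace RAAM

variable (X) in
def toRAAG : RAAM X →* RAAG X :=
  (raamCon X).lift (FreeMonoid.lift (RAAG.of X)) <| Con.conGen_le.mpr <| by
    rintro _ _ ⟨x, y, hxy, rfl, rfl⟩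
    exact (Con.ker_rel _).mpr <| by
      simpa only [map_mul, FreeMonoid.lift_eval_of] using RAAG.of_mul_of_comm hxy

theorem toRAAG_of (v : V) : toRAAG X (RAAM.of X v) = RAAG.of X v := rfl

theorem mk_cons (a : V) (l : List V) : RAAM.mk X (a :: l) = RAAM.of X a * RAAM.mk X l := rfl

theorem mk_append (l₁ l₂ : List V) :
    RAAM.mk X (l₁ ++ l₂) = RAAM.mk X l₁ * RAAM.mk X l₂ := by
  rw [RAAM.mk, FreeMonoid.ofList_append, map_mul]; rfl

variable (X) in
theorem mk_surjective : Function.Surjective (RAAM.mk X) := fun u => by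
  obtain ⟨w, rfl⟩ := Con.mk'_surjective u
  exact ⟨w.toList, by rw [RAAM.mk, FreeMonoid.ofList_toList]⟩

theorem commute_of_of {x y : V} (h : X.Adj x y) : Commute (RAAM.of X x) (RAAM.of X y) :=
  (Con.eq _).mpr <| ConGen.Rel.of _ _ ⟨x, y, h, rfl, rfl⟩

theorem commute_of_mk {a : V} : ∀ {l : List V}, (∀ b ∈ l, X.Adj a b) →
    Commute (RAAM.of X a) (RAAM.mk X l)
  | [], _ => Commute.one_right _
  | b :: l, h => by
    rw [mk_cons]
    exact (commute_of_of (h b List.mem_cons_self)).mul_right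
      (commute_of_mk fun c hc => h c (List.mem_cons_of_mem b hc))

end RAAM

theorem RAAG.toFreeGroup_toRAAG_mk [DecidableEq V] {s : Finset V} (hs : X.IsIndepSet s)
    (l : List V) :
    toFreeGroup hs (RAAM.toRAAG X (RAAM.mk X l)) =
      FreeGroup.mk ((l.filter (· ∈ s)).map (·, true)) := by
  induction l with
  | nil => rfl
  | cons c l ih =>
    rw [RAAM.mk_cons, map_mul, map_mul, ih, RAAM.toRAAG_of, toFreeGroup_of]
    by_cases hc : c ∈ s
    · rw [if_pos hc, List.filter_cons_of_pos (p := (· ∈ s)) (decide_eq_true hc), List.map_cons]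
      rfl
    · rw [if_neg hc, one_mul, List.filter_cons_of_neg (p := (· ∈ s)) (by simpa using hc)]

namespace RAAM

variable [DecidableEq V] {a : V} {t p r : List V}

theorem adj_of_forall_isIndepSet_filter_eq
    (h : ∀ s : Finset V, X.IsIndepSet s →
      (a :: t).filter (· ∈ s) = (p ++ a :: r).filter (· ∈ s))
    (ha : a ∉ p) : ∀ b ∈ p, X.Adj a b := by
  intro b hb
  by_contra hab
  have hs : X.IsIndepSet ↑({a, b} : Finset V) := by
    rw [Finset.coe_pair]
    exact Set.pairwise_pair.mpr fun _ => ⟨hab, fun hba => hab hba.symm⟩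
  obtain ⟨c, q, hq⟩ := List.exists_cons_of_ne_nil <|
    List.ne_nil_of_mem (a := b) (l := p.filter (· ∈ ({a, b} : Finset V))) (by simp [hb])
  have hc : c ∈ p := (List.mem_filter.mp (hq ▸ List.mem_cons_self)).1
  have hab_filter := h _ hs
  rw [List.filter_append, hq] at hab_filter
  simp only [List.filter_cons, Finset.mem_insert, Finset.mem_singleton, true_or, decide_true,
    if_true, List.cons_append, List.cons.injEq] at hab_filter
  exact ha (hab_filter.1 ▸ hc)

theorem filter_eq_of_forall_isIndepSet_filter_eq
    (h : ∀ s : Finset V, X.IsIndepSet s →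
      (a :: t).filter (· ∈ s) = (p ++ a :: r).filter (· ∈ s))
    (ha : a ∉ p) (hadj : ∀ b ∈ p, X.Adj a b) :
    ∀ s : Finset V, X.IsIndepSet s → t.filter (· ∈ s) = (p ++ r).filter (· ∈ s) := by
  intro s hs
  have hst := h s hs
  by_cases has : a ∈ s
  · have hp : p.filter (· ∈ s) = [] := List.filter_eq_nil_iff.mpr fun c hc hcs =>
      hs has (of_decide_eq_true hcs) (fun hac => ha (hac ▸ hc)) (hadj c hc)
    simpa [List.filter_cons, has, hp] using hst
  · simpa [List.filter_cons, has] using hst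

theorem mk_eq_mk_of_forall_isIndepSet_filter_eq : ∀ {l₁ l₂ : List V},
    (∀ s : Finset V, X.IsIndepSet s → l₁.filter (· ∈ s) = l₂.filter (· ∈ s)) →
      RAAM.mk X l₁ = RAAM.mk X l₂
  | [], [], _ => rfl
  | [], c :: l₂, h => by simpa using h {c} (by simp)
  | a :: t, l₂, h => by
    have hal₂ : a ∈ l₂ := by
      have ha_filter := h {a} (by simp)
      simp only [List.filter_cons, Finset.mem_singleton, decide_true, if_true] at ha_filter
      exact (List.mem_filter.mp (ha_filter ▸ List.mem_cons_self)).1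
    obtain ⟨p, r, rfl, ha⟩ := List.eq_append_cons_of_mem hal₂
    have hadj := adj_of_forall_isIndepSet_filter_eq h ha
    calc RAAM.mk X (a :: t)
        = RAAM.of X a * RAAM.mk X (p ++ r) := by
          rw [mk_cons, mk_eq_mk_of_forall_isIndepSet_filter_eq
            (filter_eq_of_forall_isIndepSet_filter_eq h ha hadj)]
      _ = RAAM.mk X (p ++ a :: r) := by
          rw [mk_append, mk_append, mk_cons, ← mul_assoc, (commute_of_mk hadj).eq, mul_assoc]

end RAAM

end

theorem raam_to_raag_injective_general {V : Type*} (X : SimpleGraph V) :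
    ∃ f : RAAM X →* RAAG X,
      (∀ v : V, f (RAAM.of X v) = RAAG.of X v) ∧ Function.Injective f := by
  classical
  refine ⟨RAAM.toRAAG X, RAAM.toRAAG_of, fun u v huv => ?_⟩
  obtain ⟨l₁, rfl⟩ := RAAM.mk_surjective X u
  obtain ⟨l₂, rfl⟩ := RAAM.mk_surjective X v
  refine RAAM.mk_eq_mk_of_forall_isIndepSet_filter_eq fun s hs =>
    FreeGroup.mk_map_true_injective ?_
  simpa only [RAAG.toFreeGroup_toRAAG_mk] using congrArg (RAAG.toFreeGroup hs) huv

theorem raam_to_raag_injective {V : Type*} [Fintype V] (X : SimpleGraph V) :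
    ∃ f : RAAM X →* RAAG X,
      (∀ v : V, f (RAAM.of X v) = RAAG.of X v) ∧ Function.Injective f :=
  raam_to_raag_injective_general X
end
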